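/- Let M be a problem-sensitive model and a ∈ P a decision problem. Then Π_a = {⟦Γ⟧ : Γ ∈ S⁻¹(a)} is a partition of W (its cells are nonempty, pairwise disjoint, and cover W), and for every φ ∈ L_CPL, if a ∈ s(φ) then sm(φ) ⊑ Π_a, i.e. every cell of sm(φ) is a union of cells of Π_a. -/
import Mathlib


/-- Formulas of classical propositional logic `L_CPL` over a countable set
of atomic propositions (represented by natural numbers). -/
inductive CPL : Type
  | top : CPL
  | atom : ℕ → CPL
  | neg : CPL → CPL
  | or : CPL → CPL → CPL
  | and : CPL → CPL → CPL
  deriving DecidableEq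
/-- A problem-sensitive model `M = (W, R, (P, ⊕, s), f, V)`: a nonempty set of
worlds, a serial accessibility (conative) relation, a problems model, a
function `f` assigning to each world the decision problem the agent faces
there, and a valuation. -/
structure PSModel where
  W : Type
  Wnonempty : Nonempty W
  R : W → W → Prop
  serial : ∀ w, ∃ v, R w v
  P : Type
  Pnonempty : Nonempty P
  fuse : P → P → P
  idem : ∀ a, fuse a a = a
  comm : ∀ a b, fuse a b = fuse b a
  assoc : ∀ a b c, fuse (fuse a b) c = fuse a (fuse b c)
  fusion : ∀ A : Set P, ∃ a, (∀ x ∈ A, fuse x a = a) ∧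
    ∀ b, (∀ x ∈ A, fuse x b = b) → fuse a b = b
  satom : ℕ → Set P
  upward : ∀ (p : ℕ) (a b : P), fuse a b = b → a ∈ satom p → b ∈ satom p
  f : W → P
  V : ℕ → Set W

/-- The extension of the solution assignment `s` to the whole language `L_CPL`. -/
def PSModel.sol (M : PSModel) : CPL → Set M.P
  | .top => Set.univ
  | .atom p => M.satom p
  | .neg φ => M.sol φ
  | .or φ ψ => M.sol φ ∩ M.sol ψ
  | .and φ ψ => {c | ∃ a ∈ M.sol φ, ∃ b ∈ M.sol ψ, c = M.fuse a b}

/-- Classical satisfaction of `L_CPL` formulas at a world. -/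
def PSModel.satCPL (M : PSModel) : M.W → CPL → Prop
  | _, .top => True
  | w, .atom p => w ∈ M.V p
  | w, .neg φ => ¬ M.satCPL w φ
  | w, .or φ ψ => M.satCPL w φ ∨ M.satCPL w ψ
  | w, .and φ ψ => M.satCPL w φ ∧ M.satCPL w ψ
/-- The truth set `⟦φ⟧` of an `L_CPL` formula in a problem-sensitive model. -/
def PSModel.truthSet (M : PSModel) (φ : CPL) : Set M.W := {w | M.satCPL w φ}

/-- The (Lewisian) subject matter of a formula: `sm(⊤) = {W}`;
`sm(p) = {⟦p⟧, W∖⟦p⟧} ∖ {∅}`; `sm(¬φ) = sm(φ)`;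
`sm(φ ∧ ψ) = sm(φ ∨ ψ) = {X ∩ Y | X ∈ sm(φ), Y ∈ sm(ψ)} ∖ {∅}`. -/
def PSModel.sm (M : PSModel) : CPL → Set (Set M.W)
  | .top => {Set.univ}
  | .atom p => {M.truthSet (.atom p), (M.truthSet (.atom p))ᶜ} \ {∅}
  | .neg φ => M.sm φ
  | .or φ ψ => {Z | ∃ X ∈ M.sm φ, ∃ Y ∈ M.sm ψ, Z = X ∩ Y} \ {∅}
  | .and φ ψ => {Z | ∃ X ∈ M.sm φ, ∃ Y ∈ M.sm ψ, Z = X ∩ Y} \ {∅}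

/-- Extensional parthood between collections of sets of worlds:
`Π₁ ⊑ Π₂` iff every element of `Π₁` is a union of elements of `Π₂`. -/
def partOf {W : Type} (P1 P2 : Set (Set W)) : Prop :=
  ∀ X ∈ P1, ∃ S ⊆ P2, X = ⋃₀ S

/-- `s⁻¹(a)`: the set of formulas `φ` with `a ∈ s(φ)`. -/
def PSModel.sInv (M : PSModel) (a : M.P) : Set CPL := {φ | a ∈ M.sol φ}

/-- `⟦Γ⟧`: the set of worlds satisfying every formula in `Γ`. -/
def PSModel.cell (M : PSModel) (Γ : Set CPL) : Set M.W :=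
  {w | ∀ φ ∈ Γ, M.satCPL w φ}

/-- `S⁻¹(a)`: the maximally satisfiable subsets of `s⁻¹(a)`, i.e. subsets
`Γ ⊆ s⁻¹(a)` satisfied at some single world such that no strictly larger
subset of `s⁻¹(a)` is satisfiable at a single world. -/
def PSModel.maxSat (M : PSModel) (a : M.P) : Set (Set CPL) :=
  {Γ | Γ ⊆ M.sInv a ∧ (∃ w, w ∈ M.cell Γ) ∧
    ∀ Δ, Δ ⊆ M.sInv a → Γ ⊂ Δ → ¬ ∃ w, w ∈ M.cell Δ}

/-- The partition `Π_a = {⟦Γ⟧ : Γ ∈ S⁻¹(a)}` induced by a decision problem. -/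
def PSModel.Pi (M : PSModel) (a : M.P) : Set (Set M.W) :=
  {X | ∃ Γ ∈ M.maxSat a, X = M.cell Γ}

lemma sol_upward (M : PSModel) : ∀ (φ : CPL) (a b : M.P),
    M.fuse a b = b → a ∈ M.sol φ → b ∈ M.sol φ := by
  intro φ
  induction φ with
  | top => intro a b _ _; trivial
  | atom p => intro a b h ha; exact M.upward p a b h ha
  | neg φ ih => exact ih
  | or φ ψ ih1 ih2 =>
    intro a b h ha
    exact ⟨ih1 a b h ha.1, ih2 a b h ha.2⟩
  | and φ ψ ih1 ih2 =>
    intro a b h ha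
    obtain ⟨x, hx, y, hy, rfl⟩ := ha
    refine ⟨x, hx, M.fuse y b, ih2 y (M.fuse y b) (by rw [← M.assoc, M.idem]) hy, ?_⟩
    rw [← M.assoc, h]

lemma sm_invariant (M : PSModel) (a : M.P) :
    ∀ (φ : CPL), a ∈ M.sol φ →
    ∀ w v : M.W, (∀ ψ ∈ M.sInv a, (M.satCPL w ψ ↔ M.satCPL v ψ)) →
    ∀ X ∈ M.sm φ, (w ∈ X ↔ v ∈ X) := by
  intro φ
  induction φ with
  | top =>
    intro _ w v _ X hX
    simp only [PSModel.sm, Set.mem_singleton_iff] at hX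
    subst hX; simp
  | atom p =>
    intro ha w v hwv X hX
    have hp := hwv (.atom p) ha
    obtain ⟨hX1, _⟩ := hX
    simp only [Set.mem_insert_iff, Set.mem_singleton_iff] at hX1
    rcases hX1 with h | h <;> subst h
    · exact hp
    · simp only [Set.mem_compl_iff, PSModel.truthSet, Set.mem_setOf_eq]
      exact not_congr hp
  | neg φ ih => exact ih
  | or φ ψ ih1 ih2 =>
    intro ha w v hwv X hX
    obtain ⟨⟨X1, hX1, X2, hX2, rfl⟩, _⟩ := hX
    have h1 := ih1 ha.1 w v hwv X1 hX1
    have h2 := ih2 ha.2 w v hwv X2 hX2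
    simp only [Set.mem_inter_iff]; tauto
  | and φ ψ ih1 ih2 =>
    intro ha w v hwv X hX
    obtain ⟨x, hx, y, hy, rfl⟩ := ha
    have haφ : M.fuse x y ∈ M.sol φ :=
      sol_upward M φ x _ (by rw [← M.assoc, M.idem]) hx
    have haψ : M.fuse x y ∈ M.sol ψ :=
      sol_upward M ψ y _ (by rw [M.comm, M.assoc, M.idem]) hy
    obtain ⟨⟨X1, hX1, X2, hX2, rfl⟩, _⟩ := hX
    have h1 := ih1 haφ w v hwv X1 hX1
    have h2 := ih2 haψ w v hwv X2 hX2
    simp only [Set.mem_inter_iff]; tauto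

/-- `Γ_w`: the set of formulas of `s⁻¹(a)` true at `w`. -/
def gam (M : PSModel) (a : M.P) (w : M.W) : Set CPL :=
  {φ | φ ∈ M.sInv a ∧ M.satCPL w φ}

lemma gam_maxSat (M : PSModel) (a : M.P) (w : M.W) : gam M a w ∈ M.maxSat a := by
  refine ⟨fun φ hφ => hφ.1, ⟨w, fun φ hφ => hφ.2⟩, ?_⟩
  rintro Δ hΔ hss ⟨v, hv⟩
  obtain ⟨φ, hφΔ, hφn⟩ := Set.exists_of_ssubset hss
  have hφs : φ ∈ M.sInv a := hΔ hφΔ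
  have hnw : ¬ M.satCPL w φ := fun h => hφn ⟨hφs, h⟩
  have hneg : CPL.neg φ ∈ gam M a w := ⟨hφs, hnw⟩
  have := hv (CPL.neg φ) (hss.1 hneg)
  exact this (hv φ hφΔ)

lemma maxSat_eq_gam (M : PSModel) (a : M.P) {Γ : Set CPL} {w : M.W}
    (hΓ : Γ ∈ M.maxSat a) (hw : w ∈ M.cell Γ) : Γ = gam M a w := by
  obtain ⟨hΓs, _, hmax⟩ := hΓ
  have hsub : Γ ⊆ gam M a w := fun φ hφ => ⟨hΓs hφ, hw φ hφ⟩
  by_contra hne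
  exact hmax (gam M a w) (fun φ hφ => hφ.1) (hsub.ssubset_of_ne hne)
    ⟨w, fun φ hφ => hφ.2⟩

/-- For every problem-sensitive model `M` and decision problem
`a`, the collection `Π_a = {⟦Γ⟧ : Γ ∈ S⁻¹(a)}` is a partition of `W` (cells
are nonempty, pairwise disjoint, and cover `W`), and for every `φ ∈ L_CPL`,
if `a ∈ s(φ)` then `sm(φ) ⊑ Π_a`. -/
theorem Pi_partition_and_sm_part (M : PSModel) (a : M.P) :
    ((∀ X ∈ M.Pi a, X ≠ ∅) ∧
     (∀ X ∈ M.Pi a, ∀ Y ∈ M.Pi a, X ≠ Y → X ∩ Y = ∅) ∧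
     ⋃₀ M.Pi a = Set.univ) ∧
    (∀ φ : CPL, a ∈ M.sol φ → partOf (M.sm φ) (M.Pi a)) := by
  refine ⟨⟨?_, ?_, ?_⟩, ?_⟩
  · rintro X ⟨Γ, hΓ, rfl⟩
    obtain ⟨_, ⟨w, hw⟩, _⟩ := hΓ
    exact fun h => (h ▸ hw : w ∈ (∅ : Set M.W))
  · rintro X ⟨Γ, hΓ, rfl⟩ Y ⟨Δ, hΔ, rfl⟩ hne
    by_contra h
    obtain ⟨w, hwΓ, hwΔ⟩ := Set.nonempty_iff_ne_empty.2 h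
    exact hne (by rw [maxSat_eq_gam M a hΓ hwΓ, maxSat_eq_gam M a hΔ hwΔ])
  · apply Set.eq_univ_of_forall
    intro w
    exact ⟨M.cell (gam M a w), ⟨gam M a w, gam_maxSat M a w, rfl⟩,
      fun φ hφ => hφ.2⟩
  · intro φ ha X hX
    refine ⟨{Y | ∃ w ∈ X, Y = M.cell (gam M a w)}, ?_, ?_⟩
    · rintro Y ⟨w, _, rfl⟩
      exact ⟨gam M a w, gam_maxSat M a w, rfl⟩
    · ext v
      constructor
      · intro hv
        exact ⟨M.cell (gam M a v), ⟨v, hv, rfl⟩, fun ψ hψ => hψ.2⟩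
      · rintro ⟨Y, ⟨w, hwX, rfl⟩, hv⟩
        have hwv : ∀ ψ ∈ M.sInv a, (M.satCPL w ψ ↔ M.satCPL v ψ) := by
          intro ψ hψ
          constructor
          · intro h; exact hv ψ ⟨hψ, h⟩
          · intro h
            by_contra hnw
            exact hv (CPL.neg ψ) ⟨hψ, hnw⟩ h
        exact (sm_invariant M a φ ha w v hwv X hX).1 hwX
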